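/- arXiv:1410.8585 — 2 statements merged into one kernel-verified Lean document; each statement's English description precedes it below -/
import Mathlib

section
/- Let n be an even positive integer. The number of even Latin squares of size n differs from the number of odd Latin squares of size n (the Alon–Tarsi property for n) if and only if the coefficient of the multilinear monomial ∏_{(i,j) ∈ Fin n × Fin n} X_{ij} in the polynomial (det X)^n is nonzero, where det X is the determinant of the generic n × n matrix of variables. -/
open scoped Classical

namespace AlonTarsi

/-- `L` is a Latin square: each row and each column is a bijection of `Fin n`. -/
def IsLatin {n : ℕ} (L : Fin n → Fin n → Fin n) : Prop :=
  (∀ k, Function.Bijective fun i => L k i) ∧ (∀ i, Function.Bijective fun k => L k i)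

/-- The sign of a function `Fin n → Fin n`: the sign of the corresponding permutation
if it is bijective, and `1` otherwise. -/
noncomputable def signFun {n : ℕ} (f : Fin n → Fin n) : ℤ :=
  if h : Function.Bijective f then (Equiv.Perm.sign (Equiv.ofBijective f h) : ℤ) else 1

noncomputable def rowSign {n : ℕ} (L : Fin n → Fin n → Fin n) : ℤ :=
  ∏ k, signFun fun i => L k i

noncomputable def colSign {n : ℕ} (L : Fin n → Fin n → Fin n) : ℤ :=
  ∏ i, signFun fun k => L k i

noncomputable def sign {n : ℕ} (L : Fin n → Fin n → Fin n) : ℤ :=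
  rowSign L * colSign L

noncomputable def evenCard (n : ℕ) : ℕ :=
  (Finset.univ.filter fun L : Fin n → Fin n → Fin n => IsLatin L ∧ sign L = 1).card

noncomputable def oddCard (n : ℕ) : ℕ :=
  (Finset.univ.filter fun L : Fin n → Fin n → Fin n => IsLatin L ∧ sign L = -1).card

noncomputable def colEvenCard (n : ℕ) : ℕ :=
  (Finset.univ.filter fun L : Fin n → Fin n → Fin n => IsLatin L ∧ colSign L = 1).card

noncomputable def colOddCard (n : ℕ) : ℕ :=
  (Finset.univ.filter fun L : Fin n → Fin n → Fin n => IsLatin L ∧ colSign L = -1).card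

/-- The determinant of the generic n × n matrix of variables X_{ij}, over ℂ. -/
noncomputable def genericDetC (n : ℕ) : MvPolynomial (Fin n × Fin n) ℂ :=
  Matrix.det (Matrix.of fun i j : Fin n => (MvPolynomial.X (i, j) : MvPolynomial (Fin n × Fin n) ℂ))

/-! ### Auxiliary lemmas -/

set_option linter.unusedSectionVars false
set_option maxHeartbeats 1000000

section Aux

variable {n : ℕ}

lemma signFun_perm (e : Equiv.Perm (Fin n)) : signFun ⇑e = (Equiv.Perm.sign e : ℤ) := by
  rw [signFun, dif_pos e.bijective]
  congr 2
  exact Equiv.ext fun x => rfl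

lemma signFun_of_bijective {f : Fin n → Fin n} (h : Function.Bijective f) :
    signFun f = (Equiv.Perm.sign (Equiv.ofBijective f h) : ℤ) := by
  rw [signFun, dif_pos h]

lemma signFun_mul_self (f : Fin n → Fin n) : signFun f * signFun f = 1 := by
  rw [signFun]
  split_ifs with h
  · rw [← Units.val_mul, ← Units.val_one]
    congr 1
    exact Int.units_mul_self _
  · ring

lemma rowSign_mul_self (L : Fin n → Fin n → Fin n) : rowSign L * rowSign L = 1 := by
  rw [rowSign, ← Finset.prod_mul_distrib]
  simp [signFun_mul_self]

lemma colSign_mul_self (L : Fin n → Fin n → Fin n) : colSign L * colSign L = 1 := by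
  rw [colSign, ← Finset.prod_mul_distrib]
  simp [signFun_mul_self]

lemma sign_eq_one_or (L : Fin n → Fin n → Fin n) : sign L = 1 ∨ sign L = -1 := by
  have h : sign L * sign L = 1 := by
    rw [sign]
    nlinarith [rowSign_mul_self L, colSign_mul_self L]
  exact Int.isUnit_iff.1 ⟨⟨sign L, sign L, h, h⟩, rfl⟩

end Aux

/-! ### The conjugate Latin square -/

section Conj

variable {n : ℕ} [NeZero n]

noncomputable def conj (L : Fin n → Fin n → Fin n) : Fin n → Fin n → Fin n :=
  fun s k => Function.invFun (L k) s

noncomputable def conj' (L : Fin n → Fin n → Fin n) : Fin n → Fin n → Fin n :=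
  fun k i => Function.invFun (fun s => L s k) i

lemma invFun_invFun {α : Type*} [Nonempty α] {f : α → α} (hf : Function.Bijective f) :
    Function.invFun (Function.invFun f) = f := by
  funext i
  have h1 : Function.LeftInverse (Function.invFun f) f := Function.leftInverse_invFun hf.injective
  have h2 : Function.RightInverse (Function.invFun f) f := Function.rightInverse_invFun hf.surjective
  have hinj : Function.Injective (Function.invFun f) := h2.injective
  have hsurj : Function.Surjective (Function.invFun f) := h1.surjective
  apply hinj
  rw [Function.rightInverse_invFun hsurj i, h1 i]

lemma bijective_invFun {α : Type*} [Nonempty α] {f : α → α} (hf : Function.Bijective f) :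
    Function.Bijective (Function.invFun f) :=
  ⟨(Function.rightInverse_invFun hf.surjective).injective,
   (Function.leftInverse_invFun hf.injective).surjective⟩

lemma conj_isLatin {L : Fin n → Fin n → Fin n} (hL : IsLatin L) : IsLatin (conj L) := by
  constructor
  · intro s
    constructor
    · intro k k' h
      simp only [conj] at h
      have hk : L k (Function.invFun (L k) s) = s := Function.rightInverse_invFun (hL.1 k).surjective s
      have hk' : L k' (Function.invFun (L k') s) = s := Function.rightInverse_invFun (hL.1 k').surjective s
      rw [h] at hk
      exact (hL.2 (Function.invFun (L k') s)).injective (hk.trans hk'.symm)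
    · intro c
      obtain ⟨k, hk⟩ := (hL.2 c).surjective s
      refine ⟨k, ?_⟩
      show Function.invFun (L k) s = c
      have := Function.leftInverse_invFun (hL.1 k).injective c
      rw [← hk]; exact this
  · intro k
    exact bijective_invFun (hL.1 k)

lemma conj'_eq (L : Fin n → Fin n → Fin n) :
    conj' L = fun k i => conj (fun a b => L b a) i k := rfl

lemma transpose_isLatin {L : Fin n → Fin n → Fin n} (hL : IsLatin L) :
    IsLatin (fun i k => L k i) := ⟨hL.2, hL.1⟩

lemma conj'_isLatin {L : Fin n → Fin n → Fin n} (hL : IsLatin L) : IsLatin (conj' L) := by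
  rw [conj'_eq]
  exact transpose_isLatin (conj_isLatin (transpose_isLatin hL))

lemma conj'_conj {L : Fin n → Fin n → Fin n} (hL : IsLatin L) : conj' (conj L) = L := by
  funext k i
  show Function.invFun (fun s => conj L s k) i = L k i
  have : (fun s => conj L s k) = Function.invFun (L k) := rfl
  rw [this, invFun_invFun (hL.1 k)]

lemma conj_conj' {L : Fin n → Fin n → Fin n} (hL : IsLatin L) : conj (conj' L) = L := by
  funext s k
  show Function.invFun (conj' L k) s = L s k
  have : conj' L k = Function.invFun (fun s => L s k) := rfl
  rw [this, invFun_invFun (hL.2 k)]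

/-! ### The sign identity -/

noncomputable def E (n : ℕ) : ℤˣ :=
  Equiv.Perm.sign (Equiv.prodComm (Fin n) (Fin n) : Equiv.Perm (Fin n × Fin n))

lemma sign_eq_conj {L : Fin n → Fin n → Fin n} (hL : IsLatin L) :
    sign L = (E n : ℤ) * rowSign (conj L) := by
  set ρ : Fin n → Equiv.Perm (Fin n) := fun k => Equiv.ofBijective _ (hL.1 k) with hρ
  set γ : Fin n → Equiv.Perm (Fin n) := fun i => Equiv.ofBijective _ (hL.2 i) with hγ
  have hc := conj_isLatin hL
  set τ : Fin n → Equiv.Perm (Fin n) := fun s => Equiv.ofBijective _ (hc.1 s) with hτ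
  have key : (Equiv.prodCongrLeft γ : Equiv.Perm (Fin n × Fin n)) =
      (Equiv.prodCongrRight ρ).trans ((Equiv.prodCongrLeft τ).trans
        (Equiv.prodComm (Fin n) (Fin n))) := by
    apply Equiv.ext
    rintro ⟨k, i⟩
    have h1 : τ (L k i) k = i := by
      show Function.invFun (L k) (L k i) = i
      exact Function.leftInverse_invFun (hL.1 k).injective i
    show ((γ i) k, i) = (L k i, (τ (L k i)) k)
    rw [h1]
    rfl
  have hsgn : (∏ i, Equiv.Perm.sign (γ i)) =
      E n * (∏ s, Equiv.Perm.sign (τ s)) * (∏ k, Equiv.Perm.sign (ρ k)) := by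
    have := congrArg Equiv.Perm.sign key
    rw [Equiv.Perm.sign_prodCongrLeft] at this
    have h2 : (Equiv.prodCongrRight ρ).trans ((Equiv.prodCongrLeft τ).trans
        (Equiv.prodComm (Fin n) (Fin n))) =
        ((Equiv.prodComm (Fin n) (Fin n) : Equiv.Perm (Fin n × Fin n)) *
          (Equiv.prodCongrLeft τ : Equiv.Perm (Fin n × Fin n))) *
          (Equiv.prodCongrRight ρ : Equiv.Perm (Fin n × Fin n)) := rfl
    rw [h2, map_mul, map_mul, Equiv.Perm.sign_prodCongrLeft, Equiv.Perm.sign_prodCongrRight] at this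
    rw [this, E]
  have hsgnZ := congrArg (Units.coeHom ℤ) hsgn
  simp only [map_mul, map_prod] at hsgnZ
  have hcol : colSign L = ∏ i, ((Equiv.Perm.sign (γ i) : ℤˣ) : ℤ) :=
    Finset.prod_congr rfl fun i _ => signFun_of_bijective (hL.2 i)
  have hrow : rowSign L = ∏ k, ((Equiv.Perm.sign (ρ k) : ℤˣ) : ℤ) :=
    Finset.prod_congr rfl fun k _ => signFun_of_bijective (hL.1 k)
  have hconjrow : rowSign (conj L) = ∏ s, ((Equiv.Perm.sign (τ s) : ℤˣ) : ℤ) :=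
    Finset.prod_congr rfl fun s _ => signFun_of_bijective (hc.1 s)
  have hsq := rowSign_mul_self L
  have hE : (Units.coeHom ℤ) (E n) = (E n : ℤ) := rfl
  rw [sign, hcol]
  rw [show (∏ i, ((Equiv.Perm.sign (γ i) : ℤˣ) : ℤ)) = ((Units.coeHom ℤ) (E n) *
      ∏ s, ((Equiv.Perm.sign (τ s) : ℤˣ) : ℤ)) * ∏ k, ((Equiv.Perm.sign (ρ k) : ℤˣ) : ℤ) from hsgnZ]
  rw [← hconjrow, ← hrow, hE]
  linear_combination (↑(E n) * rowSign (conj L)) * hsq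

end Conj

/-! ### The coefficient of the multilinear monomial in (det X)^n -/

section Coeff

variable {n : ℕ}

lemma prod_X_eq_monomial {σ : Type*} {ι : Type*} (s : Finset ι) (p : ι → σ) :
    (∏ a ∈ s, (MvPolynomial.X (p a) : MvPolynomial σ ℂ)) =
      MvPolynomial.monomial (∑ a ∈ s, Finsupp.single (p a) 1) 1 := by
  induction s using Finset.cons_induction with
  | empty => simp
  | cons a s ha ih =>
      rw [Finset.prod_cons, ih, Finset.sum_cons, MvPolynomial.X, MvPolynomial.monomial_mul, one_mul]

lemma cond_iff (g : Fin n → Equiv.Perm (Fin n)) :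
    (∑ q : Fin n × Fin n, Finsupp.single ((g q.1) q.2, q.2) (1 : ℕ)) =
      (∑ p : Fin n × Fin n, Finsupp.single p 1) ↔ ∀ i, Function.Bijective fun k => (g k) i := by
  constructor
  · intro h i
    rw [Function.bijective_iff_existsUnique]
    intro a
    have h2 := DFunLike.congr_fun h (a, i)
    rw [Finsupp.coe_finset_sum, Finsupp.coe_finset_sum] at h2
    simp only [Finset.sum_apply, Finsupp.single_apply] at h2
    have hrhs : ∑ p : Fin n × Fin n, (if p = (a, i) then (1:ℕ) else 0) = 1 := by
      rw [Finset.sum_ite_eq' Finset.univ (a,i) (fun _ => (1:ℕ))]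
      simp
    rw [hrhs] at h2
    have hlhs : ∑ q : Fin n × Fin n, (if ((g q.1) q.2, q.2) = (a, i) then (1:ℕ) else 0)
        = (Finset.univ.filter fun k : Fin n => (g k) i = a).card := by
      rw [Fintype.sum_prod_type]
      rw [Finset.card_filter]
      apply Finset.sum_congr rfl
      intro k _
      have hy : ∀ y : Fin n, (if ((g k) y = a ∧ y = i) then (1:ℕ) else 0)
          = if y = i then (if (g k) y = a then 1 else 0) else 0 := by
        intro y
        by_cases h1 : y = i <;> by_cases hh2 : (g k) y = a <;> simp [h1, hh2]
      simp only [Prod.mk.injEq, hy]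
      rw [Finset.sum_ite_eq' Finset.univ i fun y => if (g k) y = a then (1:ℕ) else 0]
      simp
    rw [hlhs] at h2
    obtain ⟨b, hb⟩ := Finset.card_eq_one.1 h2
    refine ⟨b, ?_, ?_⟩
    · have : b ∈ Finset.univ.filter fun k : Fin n => (g k) i = a := by
        rw [hb]; exact Finset.mem_singleton_self b
      exact (Finset.mem_filter.1 this).2
    · intro k hk
      have : k ∈ Finset.univ.filter fun k : Fin n => (g k) i = a :=
        Finset.mem_filter.2 ⟨Finset.mem_univ k, hk⟩
      rw [hb] at this
      exact Finset.mem_singleton.1 this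
  · intro h
    exact Equiv.sum_comp
      (Equiv.prodCongrLeft fun i => Equiv.ofBijective (fun k => (g k) i) (h i))
      fun p => Finsupp.single p 1

noncomputable def toPerms {n : ℕ} (L : Fin n → Fin n → Fin n) : Fin n → Equiv.Perm (Fin n) :=
  fun k => if h : Function.Bijective (fun i => L k i) then Equiv.ofBijective _ h else 1

lemma coeff_det_pow (n : ℕ) :
    MvPolynomial.coeff (∑ p : Fin n × Fin n, Finsupp.single p 1) ((genericDetC n) ^ n)
      = ∑ L ∈ Finset.univ.filter (fun L : Fin n → Fin n → Fin n => IsLatin L),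
          ((rowSign L : ℤ) : ℂ) := by
  have hdet : genericDetC n = ∑ σ : Equiv.Perm (Fin n),
      ((Equiv.Perm.sign σ : ℤ) : MvPolynomial (Fin n × Fin n) ℂ) *
        ∏ i, MvPolynomial.X (σ i, i) := by
    rw [genericDetC, Matrix.det_apply']
    simp only [Matrix.of_apply]
  rw [hdet]
  rw [← Fin.prod_const n (∑ σ : Equiv.Perm (Fin n),
      ((Equiv.Perm.sign σ : ℤ) : MvPolynomial (Fin n × Fin n) ℂ) *
        ∏ i, MvPolynomial.X (σ i, i))]
  rw [Finset.prod_univ_sum]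
  rw [Fintype.piFinset_univ, MvPolynomial.coeff_sum]
  have hterm : ∀ g : Fin n → Equiv.Perm (Fin n),
      MvPolynomial.coeff (∑ p : Fin n × Fin n, Finsupp.single p 1)
        (∏ k, (((Equiv.Perm.sign (g k) : ℤ) : MvPolynomial (Fin n × Fin n) ℂ) *
          ∏ i, MvPolynomial.X ((g k) i, i)))
      = (if (∀ i, Function.Bijective fun k => (g k) i)
          then (((∏ k, (Equiv.Perm.sign (g k) : ℤ)) : ℤ) : ℂ) else 0) := by
    intro g
    rw [Finset.prod_mul_distrib]
    have hc : (∏ k, ((Equiv.Perm.sign (g k) : ℤ) : MvPolynomial (Fin n × Fin n) ℂ))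
        = MvPolynomial.C (((∏ k, (Equiv.Perm.sign (g k) : ℤ)) : ℤ) : ℂ) := by
      push_cast
      rw [map_prod]
      exact Finset.prod_congr rfl fun k _ =>
        (map_intCast (MvPolynomial.C : ℂ →+* MvPolynomial (Fin n × Fin n) ℂ) _).symm
    have h1 : (∏ k, ∏ i, (MvPolynomial.X ((g k) i, i) : MvPolynomial (Fin n × Fin n) ℂ))
        = ∏ q : Fin n × Fin n, (MvPolynomial.X ((g q.1) q.2, q.2) : MvPolynomial (Fin n × Fin n) ℂ) :=
      (Fintype.prod_prod_type fun q : Fin n × Fin n =>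
        (MvPolynomial.X ((g q.1) q.2, q.2) : MvPolynomial (Fin n × Fin n) ℂ)).symm
    rw [hc, h1, prod_X_eq_monomial Finset.univ fun q : Fin n × Fin n => ((g q.1) q.2, q.2),
      MvPolynomial.coeff_C_mul, MvPolynomial.coeff_monomial]
    by_cases hcond : ∀ i, Function.Bijective fun k => (g k) i
    · rw [if_pos hcond, if_pos ((cond_iff g).2 hcond), mul_one]
    · rw [if_neg hcond, if_neg (fun h => hcond ((cond_iff g).1 h)), mul_zero]
  rw [Finset.sum_congr rfl fun g _ => hterm g]
  rw [← Finset.sum_filter]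
  refine Finset.sum_nbij' (fun g => fun k i => (g k) i) toPerms ?_ ?_ ?_ ?_ ?_
  · intro g hg
    rw [Finset.mem_filter] at hg ⊢
    exact ⟨Finset.mem_univ _, fun k => (g k).bijective, hg.2⟩
  · intro L hL
    rw [Finset.mem_filter] at hL ⊢
    refine ⟨Finset.mem_univ _, ?_⟩
    intro i
    have : (fun k => (toPerms L k) i) = fun k => L k i := by
      funext k
      rw [toPerms, dif_pos (hL.2.1 k)]
      rfl
    rw [this]
    exact hL.2.2 i
  · intro g hg
    funext k
    rw [toPerms, dif_pos (g k).bijective]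
    exact Equiv.ext fun x => rfl
  · intro L hL
    rw [Finset.mem_filter] at hL
    funext k i
    show (toPerms L k) i = L k i
    rw [toPerms, dif_pos (hL.2.1 k)]
    rfl
  · intro g hg
    rw [rowSign]
    push_cast
    apply Finset.prod_congr rfl
    intro k _
    rw [show (fun i => (g k) i) = (g k : Fin n → Fin n) from rfl, signFun_perm]

end Coeff

/-! ### Counting -/

lemma sum_sign_eq (n : ℕ) :
    ∑ L ∈ Finset.univ.filter (fun L : Fin n → Fin n → Fin n => IsLatin L), sign L
      = (evenCard n : ℤ) - (oddCard n : ℤ) := by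
  classical
  set Lat := Finset.univ.filter (fun L : Fin n → Fin n → Fin n => IsLatin L) with hLat
  rw [← Finset.sum_filter_add_sum_filter_not Lat (fun L => sign L = 1) sign]
  have h1 : ∑ L ∈ Lat.filter (fun L => sign L = 1), sign L
      = (evenCard n : ℤ) := by
    rw [Finset.sum_congr rfl (fun L hL => (Finset.mem_filter.1 hL).2)]
    rw [Finset.sum_const, nsmul_eq_mul, mul_one, evenCard, hLat, Finset.filter_filter]
  have h2 : ∑ L ∈ Lat.filter (fun L => ¬ sign L = 1), sign L
      = -(oddCard n : ℤ) := by
    have hset : Lat.filter (fun L => ¬ sign L = 1)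
        = Finset.univ.filter fun L : Fin n → Fin n → Fin n => IsLatin L ∧ sign L = -1 := by
      rw [hLat, Finset.filter_filter]
      apply Finset.filter_congr
      intro L _
      constructor
      · rintro ⟨hL, hs⟩
        exact ⟨hL, (sign_eq_one_or L).resolve_left hs⟩
      · rintro ⟨hL, hs⟩
        refine ⟨hL, ?_⟩
        rw [hs]
        decide
    rw [hset]
    rw [Finset.sum_congr rfl (fun L hL => (Finset.mem_filter.1 hL).2.2)]
    rw [Finset.sum_const, nsmul_eq_mul, oddCard]
    ring
  rw [h1, h2]
  ring

lemma sum_sign_eq_mul (n : ℕ) [NeZero n] :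
    ∑ L ∈ Finset.univ.filter (fun L : Fin n → Fin n → Fin n => IsLatin L), sign L
      = (E n : ℤ) * ∑ L ∈ Finset.univ.filter (fun L : Fin n → Fin n → Fin n => IsLatin L),
          rowSign L := by
  classical
  rw [Finset.sum_congr rfl fun L hL => sign_eq_conj (Finset.mem_filter.1 hL).2]
  rw [← Finset.mul_sum]
  congr 1
  refine Finset.sum_nbij' conj conj' ?_ ?_ ?_ ?_ ?_
  · intro L hL
    rw [Finset.mem_filter] at hL ⊢
    exact ⟨Finset.mem_univ _, conj_isLatin hL.2⟩
  · intro L hL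
    rw [Finset.mem_filter] at hL ⊢
    exact ⟨Finset.mem_univ _, conj'_isLatin hL.2⟩
  · intro L hL
    exact conj'_conj (Finset.mem_filter.1 hL).2
  · intro L hL
    exact conj_conj' (Finset.mem_filter.1 hL).2
  · intro L hL
    rfl

/-- For n even, the Alon-Tarsi property for n holds iff the coefficient of the multilinear
monomial ∏_{i,j} X_{ij} in (det X)^n is nonzero. -/
theorem alonTarsi_iff_coeff_det_pow_ne_zero (n : ℕ) (hn : 0 < n) (hev : Even n) :
    evenCard n ≠ oddCard n ↔
      MvPolynomial.coeff (∑ p : Fin n × Fin n, Finsupp.single p 1) ((genericDetC n) ^ n) ≠ 0 := by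
  haveI : NeZero n := ⟨hn.ne'⟩
  rw [coeff_det_pow n]
  have hZ : ∑ L ∈ Finset.univ.filter (fun L : Fin n → Fin n → Fin n => IsLatin L),
      ((rowSign L : ℤ) : ℂ)
      = (((∑ L ∈ Finset.univ.filter (fun L : Fin n → Fin n → Fin n => IsLatin L),
          rowSign L : ℤ)) : ℂ) := by
    push_cast
    rfl
  rw [hZ]
  rw [Int.cast_ne_zero (α := ℂ)]
  constructor
  · intro h hrow
    apply h
    have := sum_sign_eq n
    rw [sum_sign_eq_mul n, hrow, mul_zero] at this
    have h0 : (evenCard n : ℤ) = (oddCard n : ℤ) := by linarith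
    exact_mod_cast h0
  · intro h heq
    apply h
    have := sum_sign_eq n
    rw [sum_sign_eq_mul n, heq] at this
    have h0 : (E n : ℤ) * (∑ L ∈ Finset.univ.filter
        (fun L : Fin n → Fin n → Fin n => IsLatin L), rowSign L) = 0 := by
      rw [this]; ring
    rcases mul_eq_zero.1 h0 with hE | hS
    · exact absurd hE (E n).ne_zero
    · exact hS

end AlonTarsi
end

section
/- Let n be a positive integer. For each family σ : Fin n → Perm(Fin n) of n permutations of Fin n and each k ∈ Fin n, let M_k(σ) be the n × n complex matrix whose i-th column is the standard basis vector e_{σ_i(k)} of ℂ^n (i.e., with (a,i) entry equal to 1 if a = σ_i(k) and 0 otherwise). Then ∑_{σ : Fin n → Perm(Fin n)} ∏_{k ∈ Fin n} det(M_k(σ)) equals the number of column-even Latin squares of size n minus the number of column－odd Latin squares of size n. -/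
open scoped Classical

namespace AlonTarsi

lemma det_aux {n : ℕ} (τ : Fin n → Fin n) :
    Matrix.det (Matrix.of fun a i : Fin n => if a = τ i then (1 : ℂ) else 0) =
      if h : Function.Bijective τ then ((Equiv.Perm.sign (Equiv.ofBijective τ h) : ℤ) : ℂ) else 0 := by
  split_ifs with h
  · have he : (Matrix.of fun a i : Fin n => if a = τ i then (1:ℂ) else 0)
        = ((Equiv.ofBijective τ h)⁻¹ : Equiv.Perm (Fin n)).permMatrix ℂ := by
      ext a i
      simp only [Matrix.of_apply, Equiv.Perm.permMatrix, PEquiv.toMatrix_apply,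
        Equiv.toPEquiv_apply, Option.mem_some_iff]
      have : a = τ i ↔ (Equiv.ofBijective τ h)⁻¹ a = i := by
        constructor
        · rintro rfl; exact (Equiv.ofBijective τ h).symm_apply_apply i
        · rintro rfl; exact ((Equiv.ofBijective τ h).apply_symm_apply a).symm
      simp [this]
    rw [he, Matrix.det_permutation]
    simp
  · have hni : ¬ Function.Injective τ := by
      intro hi
      exact h ((Fintype.bijective_iff_injective_and_card τ).2 ⟨hi, rfl⟩)
    simp only [Function.Injective, not_forall] at hni
    obtain ⟨i, j, hij, hne⟩ := hni
    exact Matrix.det_zero_of_column_eq hne (fun k => by simp [hij])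

lemma signFun_dichotomy {n : ℕ} (f : Fin n → Fin n) : signFun f = 1 ∨ signFun f = -1 := by
  rw [signFun]
  split_ifs with h
  · rcases Int.units_eq_one_or (Equiv.Perm.sign (Equiv.ofBijective f h)) with h1 | h1 <;>
      simp [h1]
  · exact Or.inl rfl

lemma colSign_dichotomy {n : ℕ} (L : Fin n → Fin n → Fin n) :
    colSign L = 1 ∨ colSign L = -1 := by
  rw [colSign]
  refine Finset.prod_induction _ (fun x => x = 1 ∨ x = -1) ?_ (Or.inl rfl) ?_
  · rintro a b (rfl | rfl) (rfl | rfl) <;> simp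
  · intro i _; exact signFun_dichotomy _

/-- The sum over all n-tuples of permutations σ of the products of the determinants of the
matrices M_k(σ), whose i-th column is the standard basis vector e_{σ_i(k)}, equals the
number of column-even Latin squares of size n minus the number of column-odd ones. -/
theorem sum_prod_det_eq_colSign_difference (n : ℕ) (hn : 0 < n) :
    (∑ σ : Fin n → Equiv.Perm (Fin n), ∏ k : Fin n,
        Matrix.det (Matrix.of fun a i : Fin n => if a = σ i k then (1 : ℂ) else 0)) =
      (colEvenCard n : ℂ) - (colOddCard n : ℂ) := by
  classical
  set g : (Fin n → Fin n → Fin n) → ℂ :=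
    fun L => if IsLatin L then ((colSign L : ℤ) : ℂ) else 0 with hg
  have key : ∀ σ : Fin n → Equiv.Perm (Fin n),
      (∏ k : Fin n, Matrix.det (Matrix.of fun a i : Fin n => if a = σ i k then (1:ℂ) else 0)) =
      g (fun i k => σ i k) := by
    intro σ
    by_cases hL : IsLatin (fun i k => σ i k)
    · rw [hg]; simp only [if_pos hL]
      have hb : ∀ k, Function.Bijective (fun i : Fin n => σ i k) := hL.2
      rw [colSign]
      push_cast
      refine Finset.prod_congr rfl fun k _ => ?_
      rw [det_aux, dif_pos (hb k), signFun, dif_pos (hb k)]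
    · rw [hg]; simp only [if_neg hL]
      have : ∃ k, ¬ Function.Bijective fun i : Fin n => σ i k := by
        by_contra hc; push_neg at hc
        exact hL ⟨fun k => (σ k).bijective, hc⟩
      obtain ⟨k, hk⟩ := this
      refine Finset.prod_eq_zero (Finset.mem_univ k) ?_
      rw [det_aux, dif_neg hk]
  rw [Finset.sum_congr rfl fun σ _ => key σ]
  set Φ : (Fin n → Equiv.Perm (Fin n)) → (Fin n → Fin n → Fin n) :=
    fun σ i k => σ i k with hΦdef
  have hΦ : ∀ x ∈ (Finset.univ : Finset (Fin n → Equiv.Perm (Fin n))), ∀ y ∈ Finset.univ,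
      Φ x = Φ y → x = y := by
    intro x _ y _ h
    funext i
    exact Equiv.coe_fn_injective (congrFun h i)
  have h1 : ∑ σ : Fin n → Equiv.Perm (Fin n), g (Φ σ)
      = ∑ L ∈ Finset.univ.image Φ, g L := (Finset.sum_image hΦ).symm
  have h2 : ∑ L ∈ Finset.univ.image Φ, g L = ∑ L : Fin n → Fin n → Fin n, g L := by
    refine Finset.sum_subset (Finset.subset_univ _) fun L _ hLim => ?_
    rw [hg]
    simp only []
    rw [if_neg]
    intro hLat
    apply hLim
    refine Finset.mem_image.2 ⟨fun i => Equiv.ofBijective _ (hLat.1 i), Finset.mem_univ _, ?_⟩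
    funext i k
    rfl
  rw [show (∑ σ : Fin n → Equiv.Perm (Fin n), g fun i k => σ i k)
      = ∑ σ : Fin n → Equiv.Perm (Fin n), g (Φ σ) from rfl, h1, h2]
  rw [← Finset.sum_filter]
  rw [← Finset.sum_filter_add_sum_filter_not (Finset.univ.filter fun L => IsLatin L)
      (fun L => colSign L = 1)]
  have e1 : (Finset.univ.filter fun L : Fin n → Fin n → Fin n => IsLatin L).filter
      (fun L => colSign L = 1) = Finset.univ.filter fun L => IsLatin L ∧ colSign L = 1 := by
    rw [Finset.filter_filter]
  have e2 : (Finset.univ.filter fun L : Fin n → Fin n → Fin n => IsLatin L).filter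
      (fun L => ¬ colSign L = 1) = Finset.univ.filter fun L => IsLatin L ∧ colSign L = -1 := by
    rw [Finset.filter_filter]
    apply Finset.filter_congr
    intro L _
    constructor
    · rintro ⟨h1, h2⟩
      exact ⟨h1, (colSign_dichotomy L).resolve_left h2⟩
    · rintro ⟨h1, h2⟩
      refine ⟨h1, ?_⟩
      rw [h2]; decide
  rw [e1, e2]
  rw [Finset.sum_congr rfl (fun L hL => by
    rw [(Finset.mem_filter.1 hL).2.2]; norm_num :
    ∀ L ∈ Finset.univ.filter fun L : Fin n → Fin n → Fin n => IsLatin L ∧ colSign L = 1,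
      ((colSign L : ℤ) : ℂ) = 1)]
  rw [Finset.sum_congr rfl (fun L hL => by
    rw [(Finset.mem_filter.1 hL).2.2]; norm_num :
    ∀ L ∈ Finset.univ.filter fun L : Fin n → Fin n → Fin n => IsLatin L ∧ colSign L = -1,
      ((colSign L : ℤ) : ℂ) = -1)]
  rw [Finset.sum_const, Finset.sum_const]
  rw [colEvenCard, colOddCard]
  simp
  ring

end AlonTarsi
end
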